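/- arXiv:1107.4681 — 2 statements merged into one kernel-verified Lean document; each statement's English description precedes it below -/
import Mathlib

section
/- The Weyl denominator identity holds for a finite root system: the product over positive roots ∏_{α∈Δ⁺}(1 - e^{-α}) equals the alternating sum ∑_{w∈W} ε(w) e^{w(ρ)-ρ}, as elements of the group algebra of the weight lattice, where ε(w) = (-1)^{l(w)}. -/
/-!
Multiplied by `e^ρ`, the left-hand side becomes the Weyl denominator
`D = ∏_{β > 0} (e^{β/2} - e^{-β/2})`. A simple reflection `s_i` permutes the positive roots
other than `α i` and negates `α i`, so `s_i D = -D`. An element of `ℤ[V]` that is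
anti-invariant in this sense is determined by its coefficients at strictly dominant weights,
since every weight is Weyl-conjugate to a dominant one and anti-invariants vanish on the walls.
At a strictly dominant `ν` the coefficient of `D` is `[ν = ρ]`, because `ρ` minus a nonempty
sum of positive roots is never strictly dominant (the Cartan integers `2⟪α i, β⟫ / ⟪α i, α i⟫`
are integral). The alternant `∑_w ε(w) e^{w ρ}` is anti-invariant as well, using
`ε(s_i w) = -ε(w)`, which is read off from `(s_i w) D = s_i (w D)` and `D ≠ 0`; its coefficient
at a strictly dominant `ν` is also `[ν = ρ]`, because by the exchange condition only `w = 1`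
moves `ρ` into the open chamber.
-/

open scoped RealInnerProductSpace
open scoped Classical

noncomputable section

/-- The reflection `s_v(x) = x - (2(v,x)/(v,v)) v` in the vector `v`. -/
def sRefl {n : ℕ} (v x : EuclideanSpace ℝ (Fin n)) : EuclideanSpace ℝ (Fin n) :=
  x - (2 * ⟪v, x⟫ / ⟪v, v⟫) • v

/-- A finite reduced crystallographic root system `Δ` in Euclidean space together with a
chosen set of simple roots `α i` and the corresponding set `pos` of positive roots
(the roots which are nonnegative combinations of the simple roots). -/
structure RootData (n r : ℕ) where
  α : Fin r → EuclideanSpace ℝ (Fin n)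
  Δ : Finset (EuclideanSpace ℝ (Fin n))
  pos : Finset (EuclideanSpace ℝ (Fin n))
  root_ne_zero : ∀ β ∈ Δ, β ≠ (0 : EuclideanSpace ℝ (Fin n))
  simple_mem : ∀ i, α i ∈ Δ
  indep : LinearIndependent ℝ α
  reflect_mem : ∀ β ∈ Δ, ∀ γ ∈ Δ, sRefl β γ ∈ Δ
  crystallographic : ∀ β ∈ Δ, ∀ γ ∈ Δ, ∃ m : ℤ, 2 * ⟪β, γ⟫ / ⟪β, β⟫ = (m : ℝ)
  reduced : ∀ β ∈ Δ, ∀ c : ℝ, c • β ∈ Δ → c = 1 ∨ c = -1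
  pos_subset : ∀ β ∈ pos, β ∈ Δ
  mem_pos_iff : ∀ β ∈ Δ,
    (β ∈ pos ↔ ∃ c : Fin r → ℝ, (∀ i, 0 ≤ c i) ∧ β = ∑ i, c i • α i)
  pos_or_neg : ∀ β ∈ Δ, β ∈ pos ∨ -β ∈ pos

variable {n r : ℕ}

/-- The Weyl vector: half the sum of the positive roots. -/
def weylVec (S : RootData n r) : EuclideanSpace ℝ (Fin n) :=
  (1 / 2 : ℝ) • ∑ β ∈ S.pos, β

/-- The set of simple reflections, as linear automorphisms. -/
def simpleReflections (S : RootData n r) :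
    Set (EuclideanSpace ℝ (Fin n) ≃ₗ[ℝ] EuclideanSpace ℝ (Fin n)) :=
  { w | ∃ i, ∀ x, w x = sRefl (S.α i) x }

/-- The Weyl group: the group generated by the simple reflections. -/
def weylGroup (S : RootData n r) :
    Subgroup (EuclideanSpace ℝ (Fin n) ≃ₗ[ℝ] EuclideanSpace ℝ (Fin n)) :=
  Subgroup.closure (simpleReflections S)

/-- The length of a Weyl group element: the minimal number of simple reflections
in a word representing it. -/
def len (S : RootData n r)
    (w : EuclideanSpace ℝ (Fin n) ≃ₗ[ℝ] EuclideanSpace ℝ (Fin n)) : ℕ :=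
  sInf { k | ∃ l : List (EuclideanSpace ℝ (Fin n) ≃ₗ[ℝ] EuclideanSpace ℝ (Fin n)),
    l.length = k ∧ (∀ g ∈ l, g ∈ simpleReflections S) ∧ l.prod = w }

/-- The Kostant partition function: the number of ways to write `β` as a sum of
positive roots with nonnegative integer multiplicities. -/
def kostantP (S : RootData n r) (β : EuclideanSpace ℝ (Fin n)) : ℕ :=
  Nat.card { f : EuclideanSpace ℝ (Fin n) → ℕ //
    (∀ v, v ∉ S.pos → f v = 0) ∧ ∑ v ∈ S.pos, (f v : ℝ) • v = β }

local notation "V" => EuclideanSpace ℝ (Fin n)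

lemma sRefl_eq_reflection (v x : V) : sRefl v x = (ℝ ∙ v)ᗮ.reflection x := by
  rw [Submodule.reflection_orthogonal_apply, Submodule.reflection_singleton_apply, sRefl,
    real_inner_self_eq_norm_sq]
  simp only [RCLike.ofReal_real_eq_id, id, neg_sub]
  module

lemma sRefl_sRefl (v x : V) : sRefl v (sRefl v x) = x := by
  simp only [sRefl_eq_reflection, Submodule.reflection_reflection]

lemma inner_sRefl_sRefl (v x y : V) : ⟪sRefl v x, sRefl v y⟫ = ⟪x, y⟫ := by
  simp only [sRefl_eq_reflection, LinearIsometryEquiv.inner_map_map]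

lemma sRefl_self (v : V) : sRefl v v = -v := by
  rw [sRefl_eq_reflection, Submodule.reflection_orthogonalComplement_singleton_eq_neg]

lemma sRefl_of_inner_eq_zero {v x : V} (h : ⟪v, x⟫ = 0) : sRefl v x = x := by
  simp [sRefl, h]

lemma sRefl_map {u : V ≃ₗ[ℝ] V} (hu : ∀ x y, ⟪u x, u y⟫ = ⟪x, y⟫) (v x : V) :
    sRefl (u v) (u x) = u (sRefl v x) := by
  simp only [sRefl, hu, map_sub, map_smul]

open AddMonoidAlgebra

def act : (V ≃ₗ[ℝ] V) →* (AddMonoidAlgebra ℤ V ≃ₐ[ℤ] AddMonoidAlgebra ℤ V) where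
  toFun w := domCongr ℤ ℤ w.toAddEquiv
  map_one' := by ext f μ; simp; rfl
  map_mul' u v := by ext f μ; simp; rfl

lemma act_single (w : V ≃ₗ[ℝ] V) (μ : V) (c : ℤ) : act w (single μ c) = single (w μ) c :=
  domCongr_single _ _ _

lemma coeff_act_apply (w : V ≃ₗ[ℝ] V) (f : AddMonoidAlgebra ℤ V) (μ : V) :
    (act w f).coeff (w μ) = f.coeff μ := by
  simp [act]

def weylFactor (β : V) : AddMonoidAlgebra ℤ V :=
  single ((1 / 2 : ℝ) • β) 1 - single (-((1 / 2 : ℝ) • β)) 1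

lemma weylFactor_neg (β : V) : weylFactor (-β) = -weylFactor β := by
  rw [weylFactor, weylFactor, smul_neg, neg_neg, neg_sub]

lemma act_weylFactor (w : V ≃ₗ[ℝ] V) (β : V) : act w (weylFactor β) = weylFactor (w β) := by
  rw [weylFactor, weylFactor, map_sub, act_single, act_single, map_neg, map_smul]

namespace RootData

variable (S : RootData n r)

def simpleRefl (i : Fin r) : V ≃ₗ[ℝ] V := ((ℝ ∙ S.α i)ᗮ.reflection).toLinearEquiv

@[simp] lemma simpleRefl_apply (i : Fin r) (x : V) : S.simpleRefl i x = sRefl (S.α i) x :=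
  (sRefl_eq_reflection _ _).symm

lemma simpleRefl_mul_self (i : Fin r) : S.simpleRefl i * S.simpleRefl i = 1 :=
  LinearEquiv.ext fun x => by simp [sRefl_sRefl]

lemma mem_simpleReflections {s : V ≃ₗ[ℝ] V} :
    s ∈ simpleReflections S ↔ ∃ i, s = S.simpleRefl i := by
  simp only [simpleReflections, Set.mem_ofPred_eq, LinearEquiv.ext_iff, simpleRefl_apply]

lemma simpleRefl_mem_weylGroup (i : Fin r) : S.simpleRefl i ∈ weylGroup S :=
  Subgroup.subset_closure (S.mem_simpleReflections.2 ⟨i, rfl⟩)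

lemma alpha_ne_zero (i : Fin r) : S.α i ≠ 0 := S.root_ne_zero _ (S.simple_mem i)

lemma alpha_mem_pos (i : Fin r) : S.α i ∈ S.pos := by
  rw [S.mem_pos_iff _ (S.simple_mem i)]
  exact ⟨Pi.single i 1, fun j => by by_cases h : j = i <;> simp [h],
    by simp [Pi.single_apply]⟩

lemma exists_nonneg_coeffs {β : V} (hβ : β ∈ S.pos) :
    ∃ c : Fin r → ℝ, (∀ i, 0 ≤ c i) ∧ β = ∑ i, c i • S.α i :=
  (S.mem_pos_iff β (S.pos_subset β hβ)).1 hβ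

lemma neg_mem_pos_of_notMem {β : V} (hβ : β ∈ S.Δ) (h : β ∉ S.pos) : -β ∈ S.pos :=
  (S.pos_or_neg β hβ).resolve_left h

lemma neg_notMem_pos {β : V} (hβ : β ∈ S.pos) : -β ∉ S.pos := by
  intro hneg
  obtain ⟨c, hc, rfl⟩ := S.exists_nonneg_coeffs hβ
  obtain ⟨d, hd, hd_eq⟩ := S.exists_nonneg_coeffs hneg
  have hcd : ∀ i, c i + d i = 0 := Fintype.linearIndependent_iff.1 S.indep _ <| by
    simp only [add_smul, Finset.sum_add_distrib, ← hd_eq, add_neg_cancel]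
  refine S.root_ne_zero _ (S.pos_subset _ hβ) (Finset.sum_eq_zero fun i _ => ?_)
  rw [le_antisymm (by linarith [hcd i, hd i]) (hc i), zero_smul]

lemma sRefl_mem_pos (i : Fin r) {β : V} (hβ : β ∈ S.pos) (hne : β ≠ S.α i) :
    sRefl (S.α i) β ∈ S.pos := by
  obtain ⟨c, hc, hβc⟩ := S.exists_nonneg_coeffs hβ
  -- `β` is not a multiple of `α i`, since the root system is reduced
  obtain ⟨j, hji, hcj⟩ : ∃ j, j ≠ i ∧ 0 < c j := by
    by_contra! h
    have hβi : β = c i • S.α i := by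
      rw [hβc, Finset.sum_eq_single i (fun j _ hj => by
        rw [le_antisymm (h j hj) (hc j), zero_smul]) (by simp)]
    rcases S.reduced _ (S.simple_mem i) (c i) (hβi ▸ S.pos_subset β hβ) with h1 | h1
    · exact hne (by rw [hβi, h1, one_smul])
    · linarith [hc i]
  by_contra hnot
  obtain ⟨d, hd, hdβ⟩ := S.exists_nonneg_coeffs <| S.neg_mem_pos_of_notMem
    (S.reflect_mem _ (S.simple_mem i) β (S.pos_subset β hβ)) hnot
  set m : ℝ := 2 * ⟪S.α i, β⟫ / ⟪S.α i, S.α i⟫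
  have hcoeff := Fintype.linearIndependent_iff.1 S.indep
    (fun k => c k + d k - if k = i then m else 0) <| by
      simp only [sub_smul, add_smul, Finset.sum_sub_distrib, Finset.sum_add_distrib, ite_smul,
        zero_smul, Finset.sum_ite_eq', Finset.mem_univ, if_true, ← hβc, ← hdβ, sRefl]
      abel
  have := hcoeff j
  simp only [if_neg hji, sub_zero] at this
  linarith [hd j]

lemma image_sRefl_pos (i : Fin r) :
    S.pos.image (sRefl (S.α i)) = insert (-S.α i) (S.pos.erase (S.α i)) := by
  have hne : ∀ {β}, β ∈ S.pos → sRefl (S.α i) β ≠ S.α i := fun hβ h => by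
    have := congrArg (sRefl (S.α i)) h
    rw [sRefl_sRefl, sRefl_self] at this
    exact S.neg_notMem_pos (S.alpha_mem_pos i) (this ▸ hβ)
  ext γ
  simp only [Finset.mem_image, Finset.mem_insert, Finset.mem_erase]
  constructor
  · rintro ⟨β, hβ, rfl⟩
    by_cases h : β = S.α i
    · exact Or.inl (h ▸ sRefl_self _)
    · exact Or.inr ⟨hne hβ, S.sRefl_mem_pos i hβ h⟩
  · rintro (rfl | ⟨hγi, hγ⟩)
    · exact ⟨S.α i, S.alpha_mem_pos i, sRefl_self _⟩
    · exact ⟨sRefl (S.α i) γ, S.sRefl_mem_pos i hγ hγi, sRefl_sRefl _ _⟩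

@[to_additive]
lemma prod_pos_sRefl {M : Type*} [CommMonoid M] (i : Fin r) (f : V → M) :
    ∏ β ∈ S.pos, f (sRefl (S.α i) β) = f (-S.α i) * ∏ β ∈ S.pos.erase (S.α i), f β := by
  have hinj : Set.InjOn (sRefl (S.α i)) S.pos := fun x _ y _ h => by
    simpa [sRefl_sRefl] using congrArg (sRefl (S.α i)) h
  rw [← Finset.prod_image hinj, image_sRefl_pos, Finset.prod_insert]
  exact fun h => S.neg_notMem_pos (S.alpha_mem_pos i) (Finset.mem_of_mem_erase h)


lemma sRefl_weylVec (i : Fin r) : sRefl (S.α i) (weylVec S) = weylVec S - S.α i := by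
  have hsum : sRefl (S.α i) (∑ β ∈ S.pos, β) = ∑ β ∈ S.pos, β - (2 : ℝ) • S.α i := by
    rw [← simpleRefl_apply, map_sum]
    simp only [simpleRefl_apply]
    refine (S.sum_pos_sRefl i id).trans ?_
    rw [← Finset.add_sum_erase _ _ (S.alpha_mem_pos i)]
    simp only [id]
    module
  rw [weylVec, ← simpleRefl_apply, map_smul, simpleRefl_apply, hsum]
  module

lemma two_mul_inner_weylVec (i : Fin r) :
    2 * ⟪S.α i, weylVec S⟫ = ⟪S.α i, S.α i⟫ := by
  have hq : ⟪S.α i, S.α i⟫ ≠ 0 := inner_self_ne_zero.2 (S.alpha_ne_zero i)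
  have h := S.sRefl_weylVec i
  rw [sRefl, sub_right_inj] at h
  have := smul_left_injective ℝ (S.alpha_ne_zero i) (h.trans (one_smul ℝ _).symm)
  field_simp at this
  exact this

def IsStrictlyDominant (ν : V) : Prop := ∀ i, 0 < ⟪ν, S.α i⟫

lemma isStrictlyDominant_weylVec : S.IsStrictlyDominant (weylVec S) := fun i => by
  have hq : 0 < ⟪S.α i, S.α i⟫ := real_inner_self_pos.2 (S.alpha_ne_zero i)
  rw [real_inner_comm]
  linarith [S.two_mul_inner_weylVec i]

lemma inner_nonneg_of_mem_pos {x : V} (hx : ∀ i, 0 ≤ ⟪x, S.α i⟫) {β : V} (hβ : β ∈ S.pos) :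
    0 ≤ ⟪x, β⟫ := by
  obtain ⟨c, hc, rfl⟩ := S.exists_nonneg_coeffs hβ
  simp only [inner_sum, real_inner_smul_right]
  exact Finset.sum_nonneg fun i _ => mul_nonneg (hc i) (hx i)

lemma IsStrictlyDominant.inner_pos {S : RootData n r} {x : V} (hx : S.IsStrictlyDominant x)
    {β : V} (hβ : β ∈ S.pos) : 0 < ⟪x, β⟫ := by
  obtain ⟨c, hc, rfl⟩ := S.exists_nonneg_coeffs hβ
  obtain ⟨j, hj⟩ : ∃ j, 0 < c j := by
    by_contra! h
    refine S.root_ne_zero _ (S.pos_subset _ hβ) (Finset.sum_eq_zero fun i _ => ?_)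
    rw [le_antisymm (h i) (hc i), zero_smul]
  simp only [inner_sum, real_inner_smul_right]
  exact Finset.sum_pos' (fun i _ => mul_nonneg (hc i) (hx i).le)
    ⟨j, Finset.mem_univ j, mul_pos hj (hx j)⟩

lemma exists_int_two_mul_inner_sum (i : Fin r) {t : Finset V} (ht : t ⊆ S.Δ) :
    ∃ m : ℤ, 2 * ⟪S.α i, ∑ β ∈ t, β⟫ = m * ⟪S.α i, S.α i⟫ := by
  have hq : ⟪S.α i, S.α i⟫ ≠ 0 := inner_self_ne_zero.2 (S.alpha_ne_zero i)
  induction t using Finset.induction_on with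
  | empty => exact ⟨0, by simp⟩
  | insert a t ha ih =>
    obtain ⟨m, hm⟩ := ih ((Finset.subset_insert a t).trans ht)
    obtain ⟨k, hk⟩ := S.crystallographic _ (S.simple_mem i) a (ht (Finset.mem_insert_self a t))
    refine ⟨k + m, ?_⟩
    rw [Finset.sum_insert ha, inner_add_right, mul_add, hm, Int.cast_add, add_mul, ← hk]
    field_simp

/-- The Cartan integer `2⟪α i, ∑ t⟫ / ⟪α i, α i⟫` is less than that of `ρ`, which is `1`. -/
lemma inner_sum_simple_nonpos {t : Finset V} (ht : t ⊆ S.pos)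
    (hν : S.IsStrictlyDominant (weylVec S - ∑ β ∈ t, β)) (i : Fin r) :
    ⟪∑ β ∈ t, β, S.α i⟫ ≤ 0 := by
  obtain ⟨m, hm⟩ := S.exists_int_two_mul_inner_sum i (ht.trans S.pos_subset)
  have hq : 0 < ⟪S.α i, S.α i⟫ := real_inner_self_pos.2 (S.alpha_ne_zero i)
  have hρ := S.two_mul_inner_weylVec i
  have hi := hν i
  rw [inner_sub_left, real_inner_comm, real_inner_comm (S.α i)] at hi
  have hm : m ≤ 0 := by
    have : (m : ℝ) < 1 := by nlinarith
    exact Int.lt_add_one_iff.1 (by exact_mod_cast this)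
  have : (m : ℝ) ≤ 0 := by exact_mod_cast hm
  rw [real_inner_comm]
  nlinarith

lemma eq_empty_of_isStrictlyDominant {t : Finset V} (ht : t ⊆ S.pos)
    (hν : S.IsStrictlyDominant (weylVec S - ∑ β ∈ t, β)) : t = ∅ := by
  have hσ : ∑ β ∈ t, β = 0 := by
    refine real_inner_self_nonpos.1 ?_
    have := Finset.sum_nonneg fun β hβ => S.inner_nonneg_of_mem_pos (x := -∑ β ∈ t, β)
      (fun i => by rw [inner_neg_left]; linarith [S.inner_sum_simple_nonpos ht hν i]) (ht hβ)
    rw [← inner_sum, inner_neg_left] at this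
    linarith
  by_contra hne
  have hpos : 0 < ⟪weylVec S, ∑ β ∈ t, β⟫ := by
    rw [inner_sum]
    exact Finset.sum_pos (fun β hβ => S.isStrictlyDominant_weylVec.inner_pos (ht hβ))
      (Finset.nonempty_iff_ne_empty.2 hne)
  rw [hσ, inner_zero_right] at hpos
  exact lt_irrefl _ hpos

lemma weylGroup_induction {p : (V ≃ₗ[ℝ] V) → Prop} (one : p 1)
    (mul : ∀ i w, p w → p (S.simpleRefl i * w)) {w : V ≃ₗ[ℝ] V} (hw : w ∈ weylGroup S) :
    p w := by
  induction hw using Subgroup.closure_induction_left with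
  | one => exact one
  | mul_left x hx y _ ih =>
    obtain ⟨i, rfl⟩ := S.mem_simpleReflections.1 hx
    exact mul i y ih
  | inv_mul_cancel x hx y _ ih =>
    obtain ⟨i, rfl⟩ := S.mem_simpleReflections.1 hx
    rw [inv_eq_of_mul_eq_one_left (S.simpleRefl_mul_self i)]
    exact mul i y ih

lemma inner_map_map {w : V ≃ₗ[ℝ] V} (hw : w ∈ weylGroup S) (x y : V) :
    ⟪w x, w y⟫ = ⟪x, y⟫ := by
  revert x y
  refine S.weylGroup_induction (p := fun w => ∀ x y : V, ⟪w x, w y⟫ = ⟪x, y⟫)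
    (fun x y => rfl) (fun i w ih x y => ?_) hw
  simp only [LinearEquiv.mul_apply, simpleRefl_apply, inner_sRefl_sRefl, ih]

lemma map_mem_Δ {w : V ≃ₗ[ℝ] V} (hw : w ∈ weylGroup S) {β : V} (hβ : β ∈ S.Δ) : w β ∈ S.Δ := by
  refine S.weylGroup_induction (p := fun w => ∀ β ∈ S.Δ, w β ∈ S.Δ)
    (fun β hβ => hβ) (fun i w ih β hβ => ?_) hw β hβ
  rw [LinearEquiv.mul_apply, simpleRefl_apply]
  exact S.reflect_mem _ (S.simple_mem i) _ (ih β hβ)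

lemma list_prod_mem_weylGroup {l : List (V ≃ₗ[ℝ] V)} (hl : ∀ g ∈ l, g ∈ simpleReflections S) :
    l.prod ∈ weylGroup S :=
  list_prod_mem fun g hg => Subgroup.subset_closure (hl g hg)

lemma exists_word {w : V ≃ₗ[ℝ] V} (hw : w ∈ weylGroup S) :
    ∃ l : List (V ≃ₗ[ℝ] V), (∀ g ∈ l, g ∈ simpleReflections S) ∧ l.prod = w := by
  refine S.weylGroup_induction
    (p := fun w => ∃ l : List (V ≃ₗ[ℝ] V), (∀ g ∈ l, g ∈ simpleReflections S) ∧ l.prod = w)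
    ⟨[], by simp, rfl⟩ ?_ hw
  rintro i w ⟨l, hl, rfl⟩
  refine ⟨S.simpleRefl i :: l, ?_, List.prod_cons⟩
  simp only [List.mem_cons, forall_eq_or_imp]
  exact ⟨S.mem_simpleReflections.2 ⟨i, rfl⟩, hl⟩

lemma exists_word_length_eq_len {w : V ≃ₗ[ℝ] V} (hw : w ∈ weylGroup S) :
    ∃ l : List (V ≃ₗ[ℝ] V), l.length = len S w ∧
      (∀ g ∈ l, g ∈ simpleReflections S) ∧ l.prod = w := by
  obtain ⟨l, hl, hlw⟩ := S.exists_word hw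
  exact Nat.sInf_mem (s := {k | ∃ l : List (V ≃ₗ[ℝ] V), l.length = k ∧
    (∀ g ∈ l, g ∈ simpleReflections S) ∧ l.prod = w}) ⟨_, l, rfl, hl, hlw⟩

lemma len_le {l : List (V ≃ₗ[ℝ] V)} (hl : ∀ g ∈ l, g ∈ simpleReflections S) :
    len S l.prod ≤ l.length :=
  Nat.sInf_le ⟨l, rfl, hl, rfl⟩

lemma len_one : len S 1 = 0 :=
  Nat.le_zero.1 (S.len_le (l := []) (by simp))

lemma simpleRefl_mul_eq_mul_simpleRefl {u : V ≃ₗ[ℝ] V} (hu : u ∈ weylGroup S) {i j : Fin r}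
    (h : u (S.α i) = S.α j) : S.simpleRefl j * u = u * S.simpleRefl i :=
  LinearEquiv.ext fun x => by
    simp only [LinearEquiv.mul_apply, simpleRefl_apply, ← h, sRefl_map (S.inner_map_map hu)]

/-- The exchange condition. -/
lemma exists_word_mul_simpleRefl {l : List (V ≃ₗ[ℝ] V)}
    (hl : ∀ g ∈ l, g ∈ simpleReflections S) {i : Fin r} (h : l.prod (S.α i) ∉ S.pos) :
    ∃ l' : List (V ≃ₗ[ℝ] V), (∀ g ∈ l', g ∈ simpleReflections S) ∧
      l'.length + 1 = l.length ∧ l'.prod = l.prod * S.simpleRefl i := by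
  induction l with
  | nil => exact absurd (S.alpha_mem_pos i) h
  | cons t m ih =>
    obtain ⟨j, rfl⟩ := S.mem_simpleReflections.1 (hl t List.mem_cons_self)
    have hm : ∀ g ∈ m, g ∈ simpleReflections S := fun g hg => hl g (List.mem_cons_of_mem _ hg)
    rw [List.prod_cons, LinearEquiv.mul_apply, simpleRefl_apply] at h
    by_cases hmi : m.prod (S.α i) ∈ S.pos
    · have hj : m.prod (S.α i) = S.α j := by
        by_contra hne
        exact h (S.sRefl_mem_pos j hmi hne)
      refine ⟨m, hm, rfl, ?_⟩
      rw [List.prod_cons, S.simpleRefl_mul_eq_mul_simpleRefl (S.list_prod_mem_weylGroup hm) hj,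
        mul_assoc, simpleRefl_mul_self, mul_one]
    · obtain ⟨m', hm', hlen, hprod⟩ := ih hm hmi
      refine ⟨S.simpleRefl j :: m', ?_, by simp [hlen], by simp [hprod, mul_assoc]⟩
      simp only [List.mem_cons, forall_eq_or_imp]
      exact ⟨S.mem_simpleReflections.2 ⟨j, rfl⟩, hm'⟩

lemma eq_one_of_forall_mem_pos {w : V ≃ₗ[ℝ] V} (hw : w ∈ weylGroup S)
    (hpos : ∀ β ∈ S.pos, w β ∈ S.pos) : w = 1 := by
  obtain ⟨l, hlen, hl, rfl⟩ := S.exists_word_length_eq_len hw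
  rcases List.eq_nil_or_concat l with rfl | ⟨l', s, rfl⟩
  · rfl
  obtain ⟨i, rfl⟩ := S.mem_simpleReflections.1 (hl s (by simp))
  have hl' : ∀ g ∈ l', g ∈ simpleReflections S := fun g hg => hl g (by simp [hg])
  have hprod : (l'.concat (S.simpleRefl i)).prod = l'.prod * S.simpleRefl i := by simp
  have hneg : l'.prod (S.α i) ∉ S.pos := fun h => S.neg_notMem_pos h <| by
    simpa [hprod, sRefl_self] using hpos _ (S.alpha_mem_pos i)
  obtain ⟨l'', hl'', hlen'', hprod''⟩ := S.exists_word_mul_simpleRefl hl' hneg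
  have := S.len_le hl''
  rw [hprod'', ← hprod] at this
  simp only [List.length_concat] at hlen
  omega

lemma eq_one_of_isStrictlyDominant_apply_weylVec {w : V ≃ₗ[ℝ] V} (hw : w ∈ weylGroup S)
    (hdom : S.IsStrictlyDominant (w (weylVec S))) : w = 1 := by
  refine S.eq_one_of_forall_mem_pos hw fun β hβ => ?_
  by_contra hnot
  have h1 := hdom.inner_pos (S.neg_mem_pos_of_notMem (S.map_mem_Δ hw (S.pos_subset β hβ)) hnot)
  have h2 := S.isStrictlyDominant_weylVec.inner_pos hβ
  rw [inner_neg_right, S.inner_map_map hw] at h1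
  linarith

/-- A maximiser of `w ↦ ⟪w μ, ρ⟫` is dominant, since `⟪s_i x, ρ⟫ = ⟪x, ρ⟫ - ⟪x, α i⟫`. -/
lemma exists_mem_weylGroup_dominant (hfin : (weylGroup S : Set (V ≃ₗ[ℝ] V)).Finite) (μ : V) :
    ∃ w ∈ weylGroup S, ∀ i, 0 ≤ ⟪w μ, S.α i⟫ := by
  obtain ⟨w, hw, hmax⟩ := Set.exists_max_image _ (fun w : V ≃ₗ[ℝ] V => ⟪w μ, weylVec S⟫) hfin
    ⟨1, one_mem _⟩
  refine ⟨w, hw, fun i => ?_⟩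
  have := hmax _ (mul_mem (S.simpleRefl_mem_weylGroup i) (show w ∈ weylGroup S from hw))
  rw [LinearEquiv.mul_apply, simpleRefl_apply, ← inner_sRefl_sRefl (S.α i), sRefl_sRefl,
    sRefl_weylVec, inner_sub_right] at this
  linarith

def IsAntiInvariant (f : AddMonoidAlgebra ℤ V) : Prop := ∀ i, act (S.simpleRefl i) f = -f

variable {S}

lemma IsAntiInvariant.sub {f g : AddMonoidAlgebra ℤ V} (hf : S.IsAntiInvariant f)
    (hg : S.IsAntiInvariant g) : S.IsAntiInvariant (f - g) := fun i => by
  rw [map_sub, hf i, hg i, neg_sub_neg, neg_sub]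

lemma IsAntiInvariant.act_list_prod {f : AddMonoidAlgebra ℤ V} (hf : S.IsAntiInvariant f)
    {l : List (V ≃ₗ[ℝ] V)} (hl : ∀ g ∈ l, g ∈ simpleReflections S) :
    act l.prod f = (-1 : ℤ) ^ l.length • f := by
  induction l with
  | nil => simp
  | cons t m ih =>
    obtain ⟨i, rfl⟩ := S.mem_simpleReflections.1 (hl t List.mem_cons_self)
    rw [List.prod_cons, map_mul, AlgEquiv.mul_apply,
      ih fun g hg => hl g (List.mem_cons_of_mem _ hg), map_zsmul, hf i, List.length_cons,
      pow_succ, mul_neg_one, neg_smul, smul_neg]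

lemma IsAntiInvariant.act_eq {f : AddMonoidAlgebra ℤ V} (hf : S.IsAntiInvariant f)
    {w : V ≃ₗ[ℝ] V} (hw : w ∈ weylGroup S) : act w f = (-1 : ℤ) ^ len S w • f := by
  obtain ⟨l, hlen, hl, rfl⟩ := S.exists_word_length_eq_len hw
  rw [hf.act_list_prod hl, hlen]

lemma IsAntiInvariant.coeff_apply {f : AddMonoidAlgebra ℤ V} (hf : S.IsAntiInvariant f)
    {w : V ≃ₗ[ℝ] V} (hw : w ∈ weylGroup S) (μ : V) :
    f.coeff μ = (-1 : ℤ) ^ len S w * f.coeff (w μ) := by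
  rw [← coeff_act_apply w f μ, hf.act_eq hw, coeff_smul_apply, smul_eq_mul]

lemma IsAntiInvariant.coeff_eq_zero_of_inner_eq_zero {f : AddMonoidAlgebra ℤ V}
    (hf : S.IsAntiInvariant f) {ν : V} {i : Fin r} (h : ⟪ν, S.α i⟫ = 0) : f.coeff ν = 0 := by
  have := coeff_act_apply (S.simpleRefl i) f ν
  rw [simpleRefl_apply, sRefl_of_inner_eq_zero (real_inner_comm ν _ ▸ h), hf i, coeff_neg,
    Finsupp.neg_apply] at this
  omega

lemma IsAntiInvariant.eq_zero (hfin : (weylGroup S : Set (V ≃ₗ[ℝ] V)).Finite)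
    {f : AddMonoidAlgebra ℤ V} (hf : S.IsAntiInvariant f)
    (h : ∀ ν, S.IsStrictlyDominant ν → f.coeff ν = 0) : f = 0 := by
  ext μ
  obtain ⟨w, hw, hdom⟩ := S.exists_mem_weylGroup_dominant hfin μ
  have hwμ : f.coeff (w μ) = 0 := by
    by_cases hwall : ∃ i, ⟪w μ, S.α i⟫ = 0
    · obtain ⟨i, hi⟩ := hwall
      exact hf.coeff_eq_zero_of_inner_eq_zero hi
    · push Not at hwall
      exact h _ fun i => (hdom i).lt_of_ne' (hwall i)
  rw [coeff_zero, Finsupp.zero_apply, hf.coeff_apply hw μ, hwμ, mul_zero]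

variable (S)

def weylDenom : AddMonoidAlgebra ℤ V := ∏ β ∈ S.pos, weylFactor β

lemma isAntiInvariant_weylDenom : S.IsAntiInvariant S.weylDenom := fun i => by
  simp only [weylDenom, map_prod, act_weylFactor, simpleRefl_apply]
  rw [S.prod_pos_sRefl i, weylFactor_neg, neg_mul, Finset.mul_prod_erase _ _ (S.alpha_mem_pos i)]

lemma weylDenom_eq : S.weylDenom = single (weylVec S) 1 * ∏ β ∈ S.pos, (1 - single (-β) 1) := by
  have hρ : single (weylVec S) (1 : ℤ) = ∏ β ∈ S.pos, single ((1 / 2 : ℝ) • β) 1 := by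
    rw [prod_single, Finset.prod_const_one, weylVec, Finset.smul_sum]
  rw [hρ, ← Finset.prod_mul_distrib]
  refine Finset.prod_congr rfl fun β _ => ?_
  rw [weylFactor, mul_sub, mul_one, single_mul_single, mul_one]
  congr 2
  module

lemma weylDenom_eq_sum : S.weylDenom =
    ∑ t ∈ S.pos.powerset, single (weylVec S - ∑ β ∈ t, β) ((-1 : ℤ) ^ t.card) := by
  have hsign (k : ℕ) : (-1 : AddMonoidAlgebra ℤ V) ^ k = single 0 ((-1) ^ k) := by
    rw [one_def, ← single_neg, single_pow, smul_zero]
  rw [weylDenom_eq, Finset.prod_sub, Finset.mul_sum]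
  refine Finset.sum_congr rfl fun t _ => ?_
  rw [Finset.prod_const_one, prod_single, Finset.prod_const_one, hsign, mul_one,
    single_mul_single, single_mul_single, Finset.sum_neg_distrib]
  simp [sub_eq_add_neg]

lemma coeff_weylDenom_of_isStrictlyDominant {ν : V} (hν : S.IsStrictlyDominant ν) :
    S.weylDenom.coeff ν = if ν = weylVec S then 1 else 0 := by
  rw [weylDenom_eq_sum, coeff_sum, Finset.sum_apply', Finset.sum_eq_single ∅]
  · simp [coeff_single, Finsupp.single_apply, eq_comm]
  · intro t ht hne
    rw [coeff_single, Finsupp.single_apply, if_neg]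
    rintro rfl
    exact hne (S.eq_empty_of_isStrictlyDominant (Finset.mem_powerset.1 ht) hν)
  · simp

lemma neg_one_pow_len_simpleRefl_mul {w : V ≃ₗ[ℝ] V} (hw : w ∈ weylGroup S) (i : Fin r) :
    (-1 : ℤ) ^ len S (S.simpleRefl i * w) = -(-1 : ℤ) ^ len S w := by
  have hD := S.isAntiInvariant_weylDenom
  have h := hD.act_eq (mul_mem (S.simpleRefl_mem_weylGroup i) hw)
  rw [map_mul, AlgEquiv.mul_apply, hD.act_eq hw, map_zsmul, hD i] at h
  have hρ := congrArg (fun f => f.coeff (weylVec S)) h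
  simp only [coeff_smul_apply, coeff_neg, Finsupp.neg_apply, smul_eq_mul,
    S.coeff_weylDenom_of_isStrictlyDominant S.isStrictlyDominant_weylVec, if_true,
    mul_one, mul_neg] at hρ
  exact hρ.symm

def alternant (hfin : (weylGroup S : Set (V ≃ₗ[ℝ] V)).Finite) : AddMonoidAlgebra ℤ V :=
  ∑ w ∈ hfin.toFinset, single (w (weylVec S)) ((-1 : ℤ) ^ len S w)

lemma isAntiInvariant_alternant (hfin : (weylGroup S : Set (V ≃ₗ[ℝ] V)).Finite) :
    S.IsAntiInvariant (S.alternant hfin) := fun i => by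
  rw [alternant, map_sum, ← Finset.sum_neg_distrib]
  refine Finset.sum_equiv (Equiv.mulLeft (S.simpleRefl i)) (fun w => ?_) (fun w hw => ?_)
  · simp [Subgroup.mul_mem_cancel_left _ (S.simpleRefl_mem_weylGroup i)]
  · rw [act_single, Equiv.coe_mulLeft, LinearEquiv.mul_apply,
      S.neg_one_pow_len_simpleRefl_mul (hfin.mem_toFinset.1 hw), single_neg, neg_neg]

lemma coeff_alternant_of_isStrictlyDominant (hfin : (weylGroup S : Set (V ≃ₗ[ℝ] V)).Finite)
    {ν : V} (hν : S.IsStrictlyDominant ν) :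
    (S.alternant hfin).coeff ν = if ν = weylVec S then 1 else 0 := by
  rw [alternant, coeff_sum, Finset.sum_apply', Finset.sum_eq_single 1]
  · simp [coeff_single, Finsupp.single_apply, S.len_one, eq_comm]
  · intro w hw hne
    rw [coeff_single, Finsupp.single_apply, if_neg]
    rintro rfl
    exact hne (S.eq_one_of_isStrictlyDominant_apply_weylVec (hfin.mem_toFinset.1 hw) hν)
  · simp

lemma weylDenom_eq_alternant (hfin : (weylGroup S : Set (V ≃ₗ[ℝ] V)).Finite) :
    S.weylDenom = S.alternant hfin :=
  sub_eq_zero.1 <| (S.isAntiInvariant_weylDenom.sub (S.isAntiInvariant_alternant hfin)).eq_zero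
    hfin fun ν hν => by
      rw [coeff_sub, Finsupp.sub_apply, S.coeff_weylDenom_of_isStrictlyDominant hν,
        S.coeff_alternant_of_isStrictlyDominant hfin hν, sub_self]

end RootData

/-- The Weyl denominator identity: the product over positive roots of `(1 - e^{-α})`
equals the alternating sum over the Weyl group of `ε(w) e^{w(ρ)-ρ}`, as elements of the
group algebra of the weight space, where `ε(w) = (-1)^{l(w)}`. -/
theorem statement8 (S : RootData n r)
    (hfin : (weylGroup S :
      Set (EuclideanSpace ℝ (Fin n) ≃ₗ[ℝ] EuclideanSpace ℝ (Fin n))).Finite) :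
    (∏ β ∈ S.pos, ((1 : AddMonoidAlgebra ℤ (EuclideanSpace ℝ (Fin n))) -
        AddMonoidAlgebra.single (-β) 1)) =
      ∑ w ∈ hfin.toFinset,
        AddMonoidAlgebra.single (w (weylVec S) - weylVec S) ((-1 : ℤ) ^ len S w) := by
  have hρ : single (-weylVec S) (1 : ℤ) * single (weylVec S) 1 = 1 := by
    rw [single_mul_single, neg_add_cancel, one_mul, one_def]
  calc _ = single (-weylVec S) 1 * S.weylDenom := by
        rw [S.weylDenom_eq, ← mul_assoc, hρ, one_mul]
    _ = single (-weylVec S) 1 * S.alternant hfin := by rw [S.weylDenom_eq_alternant hfin]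
    _ = _ := by
        simp only [RootData.alternant, Finset.mul_sum, single_mul_single, one_mul,
          neg_add_eq_sub]
end
end

section
/- The Kostant multiplicity formula: the multiplicity of a weight λ in the irreducible highest weight module L^μ equals Σ_{w∈W} ε(w) P(w(μ+ρ) - (λ+ρ)), where P is the Kostant partition function. -/
/-!
Dividing the Weyl character formula by `∏_{β>0} (1 - e^{-β})`, whose inverse is
`∑_γ P(γ) e^{-γ}`, gives the formula. Concretely, a partition of a weight into positive roots is a
function `f : Δ⁺ → ℕ`; summing the coefficientwise character identity at `ξ + Σf` over all `f`
and substituting `h = f + 1_T`, the inner sums `∑_{T ⊆ supp h} (-1)^{|T|} = [h = 0]` collapse the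
left-hand side to `m(ξ)`, while the right-hand side counts partitions of `w(μ+ρ) - (ξ+ρ)`.
A height functional, equal to `1` on the simple roots, confines all `f` that contribute to a
finite box.
-/

open scoped RealInnerProductSpace
open scoped Classical

noncomputable section

variable {n r : ℕ}

open Finset

theorem Finset.sum_comp_add_eq_sum_filter_le {M R : Type*} [AddCommMonoid M] [PartialOrder M]
    [CanonicallyOrderedAdd M] [Sub M] [OrderedSub M] [AddLeftReflectLE M] [AddCommMonoid R]
    {F : Finset M} (hF : IsLowerSet (F : Set M)) {g : M → R}
    (hg : ∀ x ∉ F, g x = 0) (a : M) :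
    ∑ x ∈ F, g (x + a) = ∑ x ∈ F with a ≤ x, g x := by
  rw [← sum_filter_of_ne (p := fun x => x + a ∈ F) fun x _ hx => by_contra fun h => hx (hg _ h)]
  refine sum_nbij' (· + a) (· - a) ?_ ?_ (fun x _ => add_tsub_cancel_right x a)
    (fun x hx => tsub_add_cancel_of_le (mem_filter.1 hx).2) fun _ _ => rfl
  · intro x hx
    simp_all
  · intro x hx
    rw [mem_filter] at hx ⊢
    exact ⟨hF tsub_le_self hx.1, by rw [tsub_add_cancel_of_le hx.2]; exact hx.1⟩

theorem Finset.sum_powerset_eq_sum_finset_subtype {α M : Type*} [AddCommMonoid M]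
    (s : Finset α) (φ : Finset α → M) :
    ∑ T ∈ s.powerset, φ T = ∑ T : Finset s, φ (T.map (Function.Embedding.subtype (· ∈ s))) := by
  refine (sum_nbij' (fun T => T.map (Function.Embedding.subtype _)) (fun T => T.subtype (· ∈ s))
    ?_ ?_ ?_ ?_ ?_).symm
  · intro T _
    exact mem_powerset.2 fun x hx => property_of_mem_map_subtype T hx
  · intro T _
    simp
  · intro T _
    ext x
    simp
  · intro T hT
    exact Finset.subtype_map_of_mem fun x hx => mem_powerset.1 hT hx
  · intro T _
    rfl

theorem Finset.sum_filter_indicator_le_neg_one_pow_card {ι : Type*} [Fintype ι] (h : ι → ℕ) :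
    ∑ T ∈ univ.filter fun T : Finset ι => (T : Set ι).indicator 1 ≤ h, (-1 : ℤ) ^ #T =
      if h = 0 then 1 else 0 := by
  have hT : univ.filter (fun T : Finset ι => (T : Set ι).indicator 1 ≤ h) =
      ({i | h i ≠ 0} : Finset ι).powerset := by
    ext T
    simp only [mem_filter, mem_univ, true_and, mem_powerset, subset_iff, Pi.le_def]
    refine forall_congr' fun i => ?_
    by_cases hi : i ∈ T <;> simp [hi, Nat.one_le_iff_ne_zero]
  simp [hT, sum_powerset_neg_one_pow_card, filter_eq_empty_iff, funext_iff]

theorem Finset.sum_sum_neg_one_pow_mul_add_indicator {ι : Type*} [Fintype ι]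
    {F : Finset (ι → ℕ)} (hF : IsLowerSet (F : Set (ι → ℕ))) {g : (ι → ℕ) → ℤ}
    (hg : ∀ x ∉ F, g x = 0) :
    ∑ f ∈ F, ∑ T : Finset ι, (-1) ^ #T * g (f + (T : Set ι).indicator 1) = g 0 := by
  calc _ = ∑ T : Finset ι, (-1) ^ #T * ∑ x ∈ F with (T : Set ι).indicator 1 ≤ x, g x := by
          rw [sum_comm]; simp_rw [← mul_sum, sum_comp_add_eq_sum_filter_le hF hg]
    _ = ∑ x ∈ F, g x *
          ∑ T ∈ univ.filter fun T : Finset ι => (T : Set ι).indicator 1 ≤ x, (-1) ^ #T := by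
          simp_rw [sum_filter, mul_sum, mul_ite, mul_zero]
          rw [sum_comm]
          simp_rw [mul_comm]
    _ = ∑ x ∈ F, if x = 0 then g x else 0 := by
          simp_rw [sum_filter_indicator_le_neg_one_pow_card, mul_ite, mul_one, mul_zero]
    _ = g 0 := by
          rw [sum_ite_eq']
          split_ifs with h0
          · rfl
          · exact (hg 0 h0).symm

theorem LinearIndependent.exists_linearMap_forall_apply_eq_one {ι K V : Type*} [Field K]
    [AddCommGroup V] [Module K V] {v : ι → V} (hv : LinearIndependent K v) :
    ∃ φ : V →ₗ[K] K, ∀ i, φ (v i) = 1 := by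
  obtain ⟨φ, hφ⟩ := LinearMap.exists_extend ((Module.Basis.span hv).constr K fun _ => (1 : K))
  refine ⟨φ, fun i => ?_⟩
  have := LinearMap.congr_fun hφ (Module.Basis.span hv i)
  rwa [LinearMap.comp_apply, Module.Basis.constr_basis, Submodule.subtype_apply,
    Module.Basis.span_apply] at this

theorem Fintype.linearCombination_indicator_one {ι R M : Type*} [Fintype ι] [Semiring R]
    [AddCommMonoid M] [Module R M] (v : ι → M) (T : Finset ι) :
    Fintype.linearCombination R v ((T : Set ι).indicator 1) = ∑ i ∈ T, v i := by
  simp only [Fintype.linearCombination_apply, Set.indicator_apply, SetLike.mem_coe, Pi.one_apply,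
    ite_smul, one_smul, zero_smul, sum_ite_mem]

theorem Nat.card_subtype_eq_card_filter {α : Type*} {p : α → Prop} [DecidablePred p]
    (F : Finset α) (hF : ∀ a, p a → a ∈ F) : Nat.card {a // p a} = #(F.filter p) := by
  rw [← Nat.card_eq_finsetCard]
  exact Nat.card_congr (Equiv.subtypeEquivRight fun a => by simpa using fun h => hF a h)

theorem Nat.le_ceil_div_of_sum_mul_le {ι : Type*} [Fintype ι] {a : ι → ℝ} (ha : ∀ i, 0 < a i)
    {f : ι → ℕ} {C : ℝ} (hf : ∑ i, f i * a i ≤ C) : f ≤ fun i => ⌈C / a i⌉₊ := by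
  intro i
  refine Nat.cast_le.1 (le_trans ?_ (Nat.le_ceil _))
  rw [le_div_iff₀ (ha i)]
  exact le_trans (single_le_sum (f := fun j => f j * a j)
    (fun j _ => mul_nonneg (Nat.cast_nonneg _) (ha j).le) (mem_univ i)) hf

namespace RootData

variable (S : RootData n r)

theorem height_sum_smul {ht : EuclideanSpace ℝ (Fin n) →ₗ[ℝ] ℝ} (hht : ∀ i, ht (S.α i) = 1)
    (c : Fin r → ℝ) : ht (∑ i, c i • S.α i) = ∑ i, c i := by
  simp [hht]

theorem height_pos {ht : EuclideanSpace ℝ (Fin n) →ₗ[ℝ] ℝ} (hht : ∀ i, ht (S.α i) = 1)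
    {β : EuclideanSpace ℝ (Fin n)} (hβ : β ∈ S.pos) : 0 < ht β := by
  obtain ⟨c, hc, rfl⟩ := (S.mem_pos_iff β (S.pos_subset β hβ)).1 hβ
  obtain ⟨i, hi⟩ : ∃ i, c i ≠ 0 := by
    by_contra! h
    exact S.root_ne_zero _ (S.pos_subset _ hβ) (by simp [h])
  rw [S.height_sum_smul hht]
  exact sum_pos' (fun j _ => hc j) ⟨i, mem_univ i, (hc i).lt_of_ne' hi⟩

theorem height_sub_sum_natCast_smul_le {ht : EuclideanSpace ℝ (Fin n) →ₗ[ℝ] ℝ}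
    (hht : ∀ i, ht (S.α i) = 1) (μ : EuclideanSpace ℝ (Fin n)) (c : Fin r → ℕ) :
    ht (μ - ∑ i, (c i : ℝ) • S.α i) ≤ ht μ := by
  rw [map_sub, S.height_sum_smul hht]
  exact sub_le_self _ (sum_nonneg fun i _ => Nat.cast_nonneg _)

theorem le_ceil_div_height_of_height_le {ht : EuclideanSpace ℝ (Fin n) →ₗ[ℝ] ℝ}
    (hht : ∀ i, ht (S.α i) = 1) {f : S.pos → ℕ} {C : ℝ}
    (hf : ht (Fintype.linearCombination ℕ (Subtype.val : S.pos → _) f) ≤ C) :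
    f ≤ fun i : S.pos => ⌈C / ht i⌉₊ := by
  refine Nat.le_ceil_div_of_sum_mul_le (fun i : S.pos => S.height_pos hht i.2) ?_
  simpa only [Fintype.linearCombination_apply, map_sum, map_nsmul, nsmul_eq_mul] using hf

theorem kostantP_eq_natCard (β : EuclideanSpace ℝ (Fin n)) :
    kostantP S β = Nat.card {f : S.pos → ℕ //
      Fintype.linearCombination ℕ (Subtype.val : S.pos → EuclideanSpace ℝ (Fin n)) f = β} := by
  have hsum (f : EuclideanSpace ℝ (Fin n) → ℕ) :
      ∑ v ∈ S.pos, (f v : ℝ) • v =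
        Fintype.linearCombination ℕ (Subtype.val : S.pos → _) (fun i => f i) := by
    simp_rw [Fintype.linearCombination_apply, Nat.cast_smul_eq_nsmul]
    exact (sum_coe_sort S.pos fun v => f v • v).symm
  refine Nat.card_congr
    { toFun := fun f => ⟨fun i => f.1 i, (hsum f.1).symm.trans f.2.2⟩
      invFun := fun f => ⟨fun v => if hv : v ∈ S.pos then f.1 ⟨v, hv⟩ else 0,
        fun v hv => dif_neg hv, ?_⟩
      left_inv := fun f => ?_
      right_inv := fun f => ?_ }
  · rw [hsum]
    simpa using f.2
  · ext v
    by_cases hv : v ∈ S.pos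
    · simp [hv]
    · simp [hv, f.2.1 v hv]
  · ext i
    simp

end RootData

/-- `hchar` is the Weyl character formula `ch L^μ · ∏_{β∈Δ⁺}(1 - e^{-β}) = ∑_{w∈W} ε(w) e^{w(μ+ρ)-ρ}`,
compared coefficientwise. -/
theorem statement12 (S : RootData n r)
    (hfin : (weylGroup S :
      Set (EuclideanSpace ℝ (Fin n) ≃ₗ[ℝ] EuclideanSpace ℝ (Fin n))).Finite)
    (μ : EuclideanSpace ℝ (Fin n)) (m : EuclideanSpace ℝ (Fin n) → ℕ)
    (hsupp : ∀ ξ, m ξ ≠ 0 → ∃ c : Fin r → ℕ, ξ = μ - ∑ i, (c i : ℝ) • S.α i)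
    (hchar : ∀ ξ, ∑ T ∈ S.pos.powerset,
        (-1 : ℤ) ^ T.card * (m (ξ + ∑ β ∈ T, β) : ℤ) =
      ∑ w ∈ hfin.toFinset, (-1 : ℤ) ^ len S w *
        (if w (μ + weylVec S) - weylVec S = ξ then 1 else 0)) :
    ∀ ξ, (m ξ : ℤ) = ∑ w ∈ hfin.toFinset, (-1 : ℤ) ^ len S w *
        (kostantP S (w (μ + weylVec S) - (ξ + weylVec S)) : ℤ) := by
  intro ξ
  obtain ⟨ht, hht⟩ := S.indep.exists_linearMap_forall_apply_eq_one
  set ρ := weylVec S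
  set W := hfin.toFinset
  let sig := Fintype.linearCombination ℕ (Subtype.val : S.pos → EuclideanSpace ℝ (Fin n))
  -- every partition that contributes below has height at most `C`, so lies in the box `F`
  obtain ⟨C, hC⟩ := (insert (ht μ - ht ξ) (W.image fun w => ht (w (μ + ρ) - (ξ + ρ)))).exists_le
  let F := Iic fun i : S.pos => ⌈C / ht i⌉₊
  have hF_lower : IsLowerSet (F : Set (S.pos → ℕ)) := coe_Iic (α := S.pos → ℕ) _ ▸ isLowerSet_Iic _
  have hF (f : S.pos → ℕ) (hf : ht (sig f) ≤ C) : f ∈ F :=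
    mem_Iic.2 (S.le_ceil_div_height_of_height_le hht hf)
  have hm (f : S.pos → ℕ) (hf : f ∉ F) : (m (ξ + sig f) : ℤ) = 0 := by
    by_contra h
    obtain ⟨c, hc⟩ := hsupp _ (by exact_mod_cast h)
    have hle : ht (ξ + sig f) ≤ ht μ := hc ▸ S.height_sub_sum_natCast_smul_le hht μ c
    exact hf (hF f (by linarith [hC _ (mem_insert_self _ _), map_add ht ξ (sig f)]))
  calc (m ξ : ℤ)
      = ∑ f ∈ F, ∑ T : Finset S.pos,
          (-1 : ℤ) ^ #T * m (ξ + sig (f + (T : Set S.pos).indicator 1)) := by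
        simpa using (sum_sum_neg_one_pow_mul_add_indicator hF_lower hm).symm
    _ = ∑ f ∈ F, ∑ w ∈ W, (-1 : ℤ) ^ len S w * if w (μ + ρ) - ρ = ξ + sig f then 1 else 0 := by
        refine sum_congr rfl fun f _ => ?_
        rw [← hchar, sum_powerset_eq_sum_finset_subtype]
        simp [sig, map_add, Fintype.linearCombination_indicator_one, add_assoc]
    _ = ∑ w ∈ W, (-1 : ℤ) ^ len S w * #(F.filter fun f => sig f = w (μ + ρ) - (ξ + ρ)) := by
        rw [sum_comm]
        refine sum_congr rfl fun w _ => ?_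
        rw [← mul_sum, sum_boole]
        congr 3
        ext f
        grind
    _ = _ := by
        refine sum_congr rfl fun w hw => ?_
        rw [S.kostantP_eq_natCard, Nat.card_subtype_eq_card_filter F]
        rintro f hf
        exact hF f (hf ▸ hC _ (mem_insert_of_mem (mem_image_of_mem _ hw)))
end
end
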